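/- Let U : AddCommGrp ⥤ Type be the forgetful functor on the category of additive commutative groups and for each natural number n let U^n : AddCommGrp ⥤ Type be the functor sending a group A to the type Fin n → U(A) and a homomorphism f to postcomposition with U(f). The map sending a tuple of integers a : Fin n → ℤ to the natural transformation U^n ⟶ U whose component at A sends x : Fin n → A to the sum ∑ i, a i • x i is a bijection between (Fin n → ℤ) and the natural transformations U^n ⟶ U. -/

import Mathlib

open CategoryTheory

/-- The `n`-th power of the forgetful functor on the category of additive commutative groups,
sending a group `A` to `Fin n → A` and a homomorphism to postcomposition with it. -/
def forgetPow (n : ℕ) : AddCommGrpCat.{u} ⥤ Type u where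
  obj A := Fin n → A
  map f := TypeCat.ofHom fun x => fun i => f (x i)

/-!
`forgetPow n` is corepresented by the free abelian group `ℤⁿ` with its standard basis as
universal tuple: every tuple `x` in `A` is the image of the basis under the homomorphism
`v ↦ ∑ i, v i • x i`. By naturality, an operation `τ : forgetPow n ⟶ U` is therefore determined
by the single element `τ (basis) ∈ ℤⁿ`, and the operation `x ↦ ∑ i, a i • x i` takes the value
`a` there.
-/

namespace forgetPow

variable {n : ℕ}

abbrev freeObj (n : ℕ) : AddCommGrpCat.{u} := AddCommGrpCat.of (ULift.{u} (Fin n → ℤ))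

def basis (n : ℕ) : Fin n → freeObj.{u} n := fun i => ULift.up (Pi.single i 1)

def lift {A : AddCommGrpCat.{u}} (x : Fin n → A) : freeObj.{u} n ⟶ A :=
  AddCommGrpCat.ofHom <|
    (Fintype.linearCombination ℤ x).toAddMonoidHom.comp AddEquiv.ulift.toAddMonoidHom

lemma lift_basis {A : AddCommGrpCat.{u}} (x : Fin n → A) (i : Fin n) :
    lift x (basis n i) = x i := by
  change Fintype.linearCombination ℤ x (Pi.single i 1) = x i
  simp

lemma sum_zsmul_basis (a : Fin n → ℤ) : ∑ i, a i • basis.{u} n i = ULift.up a := by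
  apply AddEquiv.ulift.injective
  simp only [map_sum, map_zsmul]
  exact (pi_eq_sum_univ' a).symm

lemma map_basis {A : AddCommGrpCat.{u}} (x : Fin n → A) :
    (forgetPow n).map (lift x) (basis n) = x :=
  funext (lift_basis x)

lemma app_eq_map_lift {F : AddCommGrpCat.{u} ⥤ Type u} (τ : forgetPow.{u} n ⟶ F)
    {A : AddCommGrpCat.{u}} (x : Fin n → A) :
    τ.app A x = F.map (lift x) (τ.app (freeObj n) (basis n)) := by
  simpa only [map_basis] using NatTrans.naturality_apply τ (lift x) (basis n)

lemma natTrans_ext {F : AddCommGrpCat.{u} ⥤ Type u} {τ σ : forgetPow.{u} n ⟶ F}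
    (h : τ.app (freeObj n) (basis n) = σ.app (freeObj n) (basis n)) : τ = σ := by
  ext A x
  exact (app_eq_map_lift τ x).trans (h ▸ (app_eq_map_lift σ x).symm)

end forgetPow

/-- Reconstruction of the `n`-ary operations `T_U(n, 1) = Nat(Uⁿ, U)` of the Lawvere theory of
abelian groups from the forgetful functor `U` on the category of additive commutative groups:
natural transformations `Uⁿ ⟶ U` correspond exactly to `n`-tuples of integers, via
`a ↦ (x ↦ ∑ i, a i • x i)`. -/
theorem abelianGroupOperations_bijective (n : ℕ) :
    Function.Bijective (fun a : Fin n → ℤ =>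
      ({ app := fun A => TypeCat.ofHom fun x => ∑ i, a i • x i
         naturality := by
           intro A B f
           ext x
           change ∑ i, a i • f (x i) = f (∑ i, a i • x i)
           simp [forgetPow, map_sum, map_zsmul] } :
        forgetPow.{u} n ⟶ forget AddCommGrpCat.{u})) := by
  refine ⟨fun a b hab => ?_, fun τ => ?_⟩
  · have hab_basis := congrArg (fun τ => τ.app (forgetPow.freeObj n) (forgetPow.basis n)) hab
    change ∑ i, a i • forgetPow.basis n i = ∑ i, b i • forgetPow.basis n i at hab_basis
    rw [forgetPow.sum_zsmul_basis, forgetPow.sum_zsmul_basis] at hab_basis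
    exact ULift.up_injective hab_basis
  · refine ⟨(τ.app (forgetPow.freeObj n) (forgetPow.basis n)).down, forgetPow.natTrans_ext ?_⟩
    exact forgetPow.sum_zsmul_basis _
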